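/- arXiv:1506.00249 — 3 statements merged into one kernel-verified Lean document; each statement's English description precedes it below -/
import Mathlib

section
/- For a graph G, |corona(G)| + |core(G)| = 2α(G) if and only if |⋃Γ| + |⋂Γ| = 2α(G) holds for every nonempty subcollection Γ of Ω(G). -/
open Set

variable {V : Type*}

/-- `S` is an independent set of `G`. -/
def IndepSet (G : SimpleGraph V) (S : Set V) : Prop :=
  ∀ x ∈ S, ∀ y ∈ S, ¬ G.Adj x y

/-- The independence number `α(G)`. -/
noncomputable def alpha (G : SimpleGraph V) : ℕ :=
  sSup {n | ∃ S : Set V, IndepSet G S ∧ S.ncard = n}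

/-- `S` is a maximum independent set of `G`. -/
def MaxIndep (G : SimpleGraph V) (S : Set V) : Prop :=
  IndepSet G S ∧ S.ncard = alpha G

/-- `Ω(G)`, the family of all maximum independent sets. -/
def Omega (G : SimpleGraph V) : Set (Set V) := {S | MaxIndep G S}

/-- `core(G)`, the intersection of all maximum independent sets. -/
def core (G : SimpleGraph V) : Set V := ⋂₀ Omega G

/-- `corona(G)`, the union of all maximum independent sets. -/
def corona (G : SimpleGraph V) : Set V := ⋃₀ Omega G

/-- The matching number `μ(G)`. -/
noncomputable def matchNum (G : SimpleGraph V) : ℕ :=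
  sSup {n | ∃ M : G.Subgraph, M.IsMatching ∧ M.edgeSet.ncard = n}

/-- A matching from `X` into `Y`: an injection `f` on `X` into `Y` such that each `x ∈ X`
is adjacent to `f x` and the edges `{x, f x}` are pairwise disjoint. -/
def MatchingFrom (G : SimpleGraph V) (X Y : Set V) : Prop :=
  ∃ f : V → V, Set.InjOn f X ∧ (∀ x ∈ X, f x ∈ Y ∧ G.Adj x (f x)) ∧
    ∀ x ∈ X, ∀ y ∈ X, x ≠ y → f x ≠ y

/-! For `S ∈ Ω(G)` and a nonempty `Γ ⊆ Ω(G)`, the set `(⋂Γ \ S) ∪ (S ∩ ⋃Γ)` is independent (any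
two of its vertices lie in a common member of `Γ`, or both in `S`), so it has at most
`α(G) = |S|` elements; this is exactly `|⋃Γ| + |⋂Γ| ≤ |S ∪ ⋃Γ| + |S ∩ ⋂Γ|`. Hence
`Γ ↦ |⋃Γ| + |⋂Γ|` is monotone on nonempty subfamilies of `Ω(G)`, and squeezing `Γ` between a
singleton `{S}` (value `2α(G)`) and `Ω(G)` (value `|corona(G)| + |core(G)|`) gives the
equivalence. -/

section

variable {G : SimpleGraph V}

lemma bddAbove_indepSet_ncard [Finite V] (G : SimpleGraph V) :
    BddAbove {n | ∃ S : Set V, IndepSet G S ∧ S.ncard = n} :=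
  ⟨Nat.card V, by rintro n ⟨S, -, rfl⟩; exact Set.ncard_le_card S⟩

lemma IndepSet.ncard_le_alpha [Finite V] {S : Set V} (h : IndepSet G S) : S.ncard ≤ alpha G :=
  le_csSup (bddAbove_indepSet_ncard G) ⟨S, h, rfl⟩

lemma omega_nonempty [Finite V] (G : SimpleGraph V) : (Omega G).Nonempty := by
  have hzero : 0 ∈ {n | ∃ S : Set V, IndepSet G S ∧ S.ncard = n} :=
    ⟨∅, fun _ hx => hx.elim, ncard_empty V⟩
  obtain ⟨S, hS, hcard⟩ := Nat.sSup_mem ⟨0, hzero⟩ (bddAbove_indepSet_ncard G)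
  exact ⟨S, hS, hcard⟩

lemma indepSet_sInter_diff_union_inter {Γ : Set (Set V)} (hΓ : ∀ T ∈ Γ, IndepSet G T)
    (hne : Γ.Nonempty) {S : Set V} (hS : IndepSet G S) :
    IndepSet G (⋂₀ Γ \ S ∪ S ∩ ⋃₀ Γ) := by
  obtain ⟨T, hT⟩ := hne
  rintro x (⟨hxI, -⟩ | ⟨hxS, T', hT', hxT'⟩) y (⟨hyI, -⟩ | ⟨hyS, T'', hT'', hyT''⟩)
  · exact hΓ T hT x (hxI T hT) y (hyI T hT)
  · exact hΓ T'' hT'' x (hxI T'' hT'') y hyT''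
  · exact hΓ T' hT' x hxT' y (hyI T' hT')
  · exact hS x hxS y hyS

lemma ncard_sUnion_add_ncard_sInter_le_insert [Finite V] {Γ : Set (Set V)} (hΓ : Γ ⊆ Omega G)
    (hne : Γ.Nonempty) {S : Set V} (hS : S ∈ Omega G) :
    (⋃₀ Γ).ncard + (⋂₀ Γ).ncard ≤ (⋃₀ insert S Γ).ncard + (⋂₀ insert S Γ).ncard := by
  rw [sUnion_insert, sInter_insert, inter_comm S]
  have hunion := ncard_union_add_ncard_inter S (⋃₀ Γ)
  have hinter := ncard_inter_add_ncard_sdiff_eq_ncard (⋂₀ Γ) S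
  have hsmall : (⋂₀ Γ \ S).ncard + (S ∩ ⋃₀ Γ).ncard ≤ S.ncard := by
    rw [← ncard_union_eq (disjoint_sdiff_left.mono_right inter_subset_left), hS.2]
    exact (indepSet_sInter_diff_union_inter (fun T hT => (hΓ hT).1) hne hS.1).ncard_le_alpha
  omega

lemma ncard_sUnion_add_ncard_sInter_mono [Finite V] {Γ Δ : Set (Set V)} (hΓΔ : Γ ⊆ Δ)
    (hΔ : Δ ⊆ Omega G) (hΓ : Γ.Nonempty) :
    (⋃₀ Γ).ncard + (⋂₀ Γ).ncard ≤ (⋃₀ Δ).ncard + (⋂₀ Δ).ncard := by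
  refine (Δ.toFinite.induction_to (C := fun Θ =>
    Γ ⊆ Θ ∧ (⋃₀ Γ).ncard + (⋂₀ Γ).ncard ≤ (⋃₀ Θ).ncard + (⋂₀ Θ).ncard)
    Γ hΓΔ ⟨subset_rfl, le_rfl⟩ ?_).2
  rintro Θ hΘΔ ⟨hΓΘ, hle⟩
  obtain ⟨S, hSΔ, hSΘ⟩ := exists_of_ssubset hΘΔ
  exact ⟨S, ⟨hSΔ, hSΘ⟩, hΓΘ.trans (subset_insert S Θ), hle.trans <|
    ncard_sUnion_add_ncard_sInter_le_insert (hΘΔ.subset.trans hΔ) (hΓ.mono hΓΘ) (hΔ hSΔ)⟩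

end

theorem stmt_5 [Fintype V] (G : SimpleGraph V) :
    ((corona G).ncard + (core G).ncard = 2 * alpha G) ↔
      (∀ Γ : Set (Set V), Γ ⊆ Omega G → Γ.Nonempty →
        (⋃₀ Γ).ncard + (⋂₀ Γ).ncard = 2 * alpha G) := by
  refine ⟨fun h Γ hΓ ⟨S, hS⟩ => ?_, fun h => h _ subset_rfl (omega_nonempty G)⟩
  have lower := ncard_sUnion_add_ncard_sInter_mono (singleton_subset_iff.2 hS) hΓ
    (singleton_nonempty S)
  have upper := ncard_sUnion_add_ncard_sInter_mono hΓ subset_rfl ⟨S, hS⟩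
  rw [sUnion_singleton, sInter_singleton, (hΓ hS).2] at lower
  rw [corona, core] at h
  omega
end

section
/- If core(G) is a critical independent set of G, then core(G) is contained in every maximum critical independent set of G; in particular core(G) ⊆ nucleus(G). -/
open Set

variable {V : Type*}

/-- The neighborhood `N(X)` of a set of vertices. -/
def nbhd (G : SimpleGraph V) (X : Set V) : Set V := {v | ∃ x ∈ X, G.Adj x v}

/-- The difference `d(X) = |X| - |N(X)|`. -/
noncomputable def diffd (G : SimpleGraph V) (X : Set V) : ℤ :=
  (X.ncard : ℤ) - ((nbhd G X).ncard : ℤ)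

/-- A critical independent set. -/
def CritIndep (G : SimpleGraph V) (A : Set V) : Prop :=
  IndepSet G A ∧ ∀ I : Set V, IndepSet G I → diffd G I ≤ diffd G A

/-- A maximum(-cardinality) critical independent set. -/
def MaxCritIndep (G : SimpleGraph V) (A : Set V) : Prop :=
  CritIndep G A ∧ ∀ B : Set V, CritIndep G B → B.ncard ≤ A.ncard

/-- `nucleus(G)`, the intersection of all maximum critical independent sets. -/
def nucleus (G : SimpleGraph V) : Set V := ⋂₀ {A | MaxCritIndep G A}

/-- `diadem(G)`, the union of all maximum critical independent sets. -/
def diadem (G : SimpleGraph V) : Set V := ⋃₀ {A | MaxCritIndep G A}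

section Aux

variable {V : Type*}

lemma nbhd_union (G : SimpleGraph V) (A B : Set V) :
    nbhd G (A ∪ B) = nbhd G A ∪ nbhd G B := by
  ext v
  constructor
  · rintro ⟨x, hx | hx, hadj⟩
    · exact Or.inl ⟨x, hx, hadj⟩
    · exact Or.inr ⟨x, hx, hadj⟩
  · rintro (⟨x, hx, hadj⟩ | ⟨x, hx, hadj⟩)
    · exact ⟨x, Or.inl hx, hadj⟩
    · exact ⟨x, Or.inr hx, hadj⟩

lemma nbhd_inter_subset (G : SimpleGraph V) (A B : Set V) :
    nbhd G (A ∩ B) ⊆ nbhd G A ∩ nbhd G B := by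
  rintro v ⟨x, hx, hadj⟩
  exact ⟨⟨x, hx.1, hadj⟩, ⟨x, hx.2, hadj⟩⟩

lemma indepBdd (G : SimpleGraph V) [Fintype V] :
    BddAbove {n | ∃ S : Set V, IndepSet G S ∧ S.ncard = n} := by
  refine ⟨Fintype.card V, ?_⟩
  rintro n ⟨S, _, rfl⟩
  have := Set.ncard_le_ncard (Set.subset_univ S) Set.finite_univ
  simpa [Set.ncard_univ] using this

lemma indep_le_alpha (G : SimpleGraph V) [Fintype V] {S : Set V} (hS : IndepSet G S) :
    S.ncard ≤ alpha G :=
  le_csSup (indepBdd G) ⟨S, hS, rfl⟩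

lemma exists_maxIndep (G : SimpleGraph V) [Fintype V] : ∃ S : Set V, MaxIndep G S := by
  have hne : {n | ∃ S : Set V, IndepSet G S ∧ S.ncard = n}.Nonempty :=
    ⟨0, ∅, fun x hx => absurd hx (Set.notMem_empty x), by simp⟩
  have hbdd : ∃ m, ∀ n ∈ {n | ∃ S : Set V, IndepSet G S ∧ S.ncard = n}, n ≤ m := by
    obtain ⟨m, hm⟩ := indepBdd G
    exact ⟨m, fun n hn => hm hn⟩
  obtain ⟨S, hS, hcard⟩ := Nat.sSup_mem hne hbdd
  exact ⟨S, hS, hcard⟩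

/-- Hall-type inequality for critical independent sets. -/
lemma hall_ineq (G : SimpleGraph V) [Fintype V] {A T : Set V}
    (hA : CritIndep G A) (hT : T ⊆ nbhd G A) :
    T.ncard ≤ (A ∩ nbhd G T).ncard := by
  set I := A \ nbhd G T with hI
  have hIindep : IndepSet G I := fun x hx y hy => hA.1 x hx.1 y hy.1
  have hd := hA.2 I hIindep
  have h1 : (A ∩ nbhd G T).ncard + I.ncard = A.ncard :=
    Set.ncard_inter_add_ncard_diff_eq_ncard A (nbhd G T) (Set.toFinite A)
  have h2 : nbhd G I ⊆ nbhd G A \ T := by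
    rintro v ⟨u, hu, huv⟩
    exact ⟨⟨u, hu.1, huv⟩, fun hvT => hu.2 ⟨v, hvT, huv.symm⟩⟩
  have h3 : (nbhd G I).ncard + T.ncard ≤ (nbhd G A).ncard := by
    have := Set.ncard_le_ncard h2 (Set.toFinite _)
    have := Set.ncard_diff_add_ncard_of_subset hT (Set.toFinite _)
    omega
  unfold diffd at hd
  omega

/-- Every critical independent set is contained in a maximum independent set. -/
lemma exists_max_superset (G : SimpleGraph V) [Fintype V] {A : Set V}
    (hA : CritIndep G A) : ∃ S : Set V, MaxIndep G S ∧ A ⊆ S := by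
  obtain ⟨S, hS⟩ := exists_maxIndep G
  set X := (S \ nbhd G A) \ A with hX
  refine ⟨A ∪ X, ⟨?_, ?_⟩, Set.subset_union_left⟩
  · -- independence
    rintro x (hx | hx) y (hy | hy) hadj
    · exact hA.1 x hx y hy hadj
    · exact hy.1.2 ⟨x, hx, hadj⟩
    · exact hx.1.2 ⟨y, hy, hadj.symm⟩
    · exact hS.1 x hx.1.1 y hy.1.1 hadj
  · -- cardinality
    have hdisj : Disjoint A X := Set.disjoint_sdiff_right
    have hcard : (A ∪ X).ncard = A.ncard + X.ncard :=
      Set.ncard_union_eq hdisj (Set.toFinite _) (Set.toFinite _)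
    have hle : (A ∪ X).ncard ≤ alpha G := by
      apply indep_le_alpha
      rintro x (hx | hx) y (hy | hy) hadj
      · exact hA.1 x hx y hy hadj
      · exact hy.1.2 ⟨x, hx, hadj⟩
      · exact hx.1.2 ⟨y, hy, hadj.symm⟩
      · exact hS.1 x hx.1.1 y hy.1.1 hadj
    have hge : alpha G ≤ (A ∪ X).ncard := by
      rw [← hS.2]
      set T := S ∩ nbhd G A with hT
      have hHall : T.ncard ≤ (A ∩ nbhd G T).ncard :=
        hall_ineq G hA Set.inter_subset_right
      have hANT : A ∩ nbhd G T ⊆ A \ S := by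
        rintro a ⟨haA, t, ht, hadj⟩
        exact ⟨haA, fun haS => hS.1 t ht.1 a haS hadj⟩
      have h4 : (A ∩ nbhd G T).ncard ≤ (A \ S).ncard :=
        Set.ncard_le_ncard hANT (Set.toFinite _)
      have h5 : S ⊆ T ∪ (S \ nbhd G A) := by
        intro s hs
        by_cases h : s ∈ nbhd G A
        · exact Or.inl ⟨hs, h⟩
        · exact Or.inr ⟨hs, h⟩
      have h6 : S.ncard ≤ T.ncard + (S \ nbhd G A).ncard :=
        le_trans (Set.ncard_le_ncard h5 (Set.toFinite _)) (Set.ncard_union_le _ _)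
      have h7 : S \ nbhd G A ⊆ X ∪ (A ∩ S) := by
        intro s hs
        by_cases h : s ∈ A
        · exact Or.inr ⟨h, hs.1⟩
        · exact Or.inl ⟨hs, h⟩
      have h8 : (S \ nbhd G A).ncard ≤ X.ncard + (A ∩ S).ncard :=
        le_trans (Set.ncard_le_ncard h7 (Set.toFinite _)) (Set.ncard_union_le _ _)
      have h9 : (A ∩ S).ncard + (A \ S).ncard = A.ncard :=
        Set.ncard_inter_add_ncard_diff_eq_ncard A S (Set.toFinite A)
      omega
    omega

end Aux

theorem stmt_7 [Fintype V] (G : SimpleGraph V)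
    (hcrit : CritIndep G (core G)) :
    (∀ A : Set V, MaxCritIndep G A → core G ⊆ A) ∧ core G ⊆ nucleus G := by
  have hmain : ∀ A : Set V, MaxCritIndep G A → core G ⊆ A := by
    intro A hA
    obtain ⟨S, hS, hAS⟩ := exists_max_superset G hA.1
    have hcS : core G ⊆ S := Set.sInter_subset_of_mem hS
    have hUS : A ∪ core G ⊆ S := Set.union_subset hAS hcS
    have hUindep : IndepSet G (A ∪ core G) :=
      fun x hx y hy => hS.1 x (hUS hx) y (hUS hy)
    have hUcrit : CritIndep G (A ∪ core G) := by
      refine ⟨hUindep, fun I hI => le_trans (hA.1.2 I hI) ?_⟩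
      -- diffd A ≤ diffd (A ∪ core)
      have hIinter : IndepSet G (A ∩ core G) :=
        fun x hx y hy => hA.1.1 x hx.1 y hy.1
      have hd1 := hA.1.2 (A ∩ core G) hIinter
      have hd2 := hcrit.2 A hA.1.1
      have n1 : (A ∪ core G).ncard + (A ∩ core G).ncard = A.ncard + (core G).ncard :=
        Set.ncard_union_add_ncard_inter A (core G) (Set.toFinite _) (Set.toFinite _)
      have n2 : nbhd G (A ∪ core G) = nbhd G A ∪ nbhd G (core G) := nbhd_union G A (core G)
      have n4 : (nbhd G A ∪ nbhd G (core G)).ncard + (nbhd G A ∩ nbhd G (core G)).ncard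
          = (nbhd G A).ncard + (nbhd G (core G)).ncard :=
        Set.ncard_union_add_ncard_inter _ _ (Set.toFinite _) (Set.toFinite _)
      have n3 : (nbhd G (A ∩ core G)).ncard ≤ (nbhd G A ∩ nbhd G (core G)).ncard :=
        Set.ncard_le_ncard (nbhd_inter_subset G A (core G)) (Set.toFinite _)
      unfold diffd at *
      rw [n2]
      omega
    have hle := hA.2 (A ∪ core G) hUcrit
    have heq : A = A ∪ core G :=
      Set.eq_of_subset_of_ncard_le Set.subset_union_left hle (Set.toFinite _)
    intro x hx
    rw [heq]
    exact Or.inr hx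
  exact ⟨hmain, Set.subset_sInter fun A hA => hmain A hA⟩
end

section
/- If Γ is a nonempty collection of maximum independent sets of G, then 2α(G) ≤ |⋃Γ| + |⋂Γ| ≤ 2(|V(G)| − μ(G)). -/
open Set

variable {V : Type*}

/-!
Lower bound: if `A` is independent and `B` is a maximum independent set, Hall's theorem gives a
matching of `A \ B` into `B \ A`, since a set `X ⊆ A \ B` with fewer neighbours in `B` could be
exchanged for them to produce an independent set larger than `B`. For `A = ⋂₀ Γ` this matching
sends `⋂₀ Γ \ B` injectively into `B \ ⋃₀ Γ`, so adding `B` to `Γ` does not decrease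
`|⋃₀ Γ| + |⋂₀ Γ|`; induction on `Γ` starts from `|A| + |A| = 2α`.

Upper bound: a maximum matching `M` matches every vertex of `⋂₀ Γ` it covers to a vertex outside
`⋃₀ Γ`, so `|V(M) ∩ ⋂₀ Γ| ≤ n - |⋃₀ Γ|`, while `|V(M) \ ⋂₀ Γ| ≤ n - |⋂₀ Γ|`; adding the two,
`2μ ≤ 2n - |⋃₀ Γ| - |⋂₀ Γ|`.
-/

section IndependentSets

variable {G : SimpleGraph V} {A B : Set V}

theorem IndepSet.ncard_le_alpha_s11 [Finite V] (hA : IndepSet G A) : A.ncard ≤ alpha G :=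
  le_csSup ⟨Nat.card V, by rintro _ ⟨S, -, rfl⟩; exact Set.ncard_le_card S⟩ ⟨A, hA, rfl⟩

theorem IndepSet.mono (hA : IndepSet G A) (hBA : B ⊆ A) : IndepSet G B :=
  fun x hx y hy => hA x (hBA hx) y (hBA hy)

theorem IndepSet.sInter {Γ : Set (Set V)} (hΓ : ∀ C ∈ Γ, IndepSet G C) (hne : Γ.Nonempty) :
    IndepSet G (⋂₀ Γ) :=
  let ⟨C, hC⟩ := hne
  (hΓ C hC).mono (Set.sInter_subset_of_mem hC)

theorem IndepSet.sdiff_neighbors_union (hA : IndepSet G A) (hB : IndepSet G B) {X : Set V}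
    (hXA : X ⊆ A) : IndepSet G ((B \ {b | ∃ x ∈ X, G.Adj x b}) ∪ X) := by
  rintro u (⟨huB, huN⟩ | huX) v (⟨hvB, hvN⟩ | hvX) huv
  · exact hB u huB v hvB huv
  · exact huN ⟨v, hvX, huv.symm⟩
  · exact hvN ⟨u, huX, huv⟩
  · exact hA u (hXA huX) v (hXA hvX) huv

theorem MaxIndep.ncard_le_ncard_inter_neighbors [Finite V] (hB : MaxIndep G B)
    (hA : IndepSet G A) {X : Set V} (hX : X ⊆ A \ B) :
    X.ncard ≤ (B ∩ {b | ∃ x ∈ X, G.Adj x b}).ncard := by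
  have hswap := (hA.sdiff_neighbors_union hB.1 fun x hx => (hX hx).1).ncard_le_alpha_s11
  have hdisj : Disjoint (B \ {b | ∃ x ∈ X, G.Adj x b}) X :=
    Set.disjoint_left.2 fun b hb hbX => (hX hbX).2 hb.1
  rw [Set.ncard_union_eq hdisj, ← hB.2,
    ← Set.ncard_inter_add_ncard_sdiff_eq_ncard B {b | ∃ x ∈ X, G.Adj x b}] at hswap
  omega

theorem IndepSet.matchingFrom_sdiff [Finite V] (hA : IndepSet G A) (hB : MaxIndep G B) :
    MatchingFrom G (A \ B) (B \ A) := by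
  classical
  have := Fintype.ofFinite V
  obtain ⟨f, hf_inj, hf_adj⟩ :=
    (Fintype.all_card_le_filter_rel_iff_exists_injective
      (fun (x : ↥(A \ B)) b => G.Adj x b ∧ b ∈ B)).1 fun s => by
      have := hB.ncard_le_ncard_inter_neighbors hA (X := Subtype.val '' (s : Set ↥(A \ B)))
        (by rintro _ ⟨x, -, rfl⟩; exact x.2)
      rw [Set.ncard_image_of_injective _ Subtype.val_injective, Set.ncard_coe_finset] at this
      convert this using 1
      rw [← Set.ncard_coe_finset]
      congr 1; ext b
      aesop
  refine ⟨fun v => if h : v ∈ A \ B then f ⟨v, h⟩ else v, ?_, fun x hx => ?_, fun x hx y hy _ => ?_⟩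
  · intro x hx y hy hxy
    simp only [dif_pos hx, dif_pos hy] at hxy
    exact congrArg Subtype.val (hf_inj hxy)
  · obtain ⟨hadj, hfB⟩ := hf_adj ⟨x, hx⟩
    simp only [dif_pos hx]
    exact ⟨⟨hfB, fun hfA => hA x hx.1 _ hfA hadj⟩, hadj⟩
  · simp only [dif_pos hx]
    exact fun hfy => hy.2 (hfy ▸ (hf_adj ⟨x, hx⟩).2)

theorem ncard_sInter_sdiff_le_ncard_sdiff_sUnion [Finite V] {Γ : Set (Set V)}
    (hΓ : ∀ C ∈ Γ, IndepSet G C) (hne : Γ.Nonempty) (hB : MaxIndep G B) :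
    (⋂₀ Γ \ B).ncard ≤ (B \ ⋃₀ Γ).ncard := by
  obtain ⟨f, hf_inj, hf_maps, -⟩ := (IndepSet.sInter hΓ hne).matchingFrom_sdiff hB
  refine Set.ncard_le_ncard_of_injOn f (fun x hx => ⟨(hf_maps x hx).1.1, ?_⟩) hf_inj
  rintro ⟨C, hC, hfC⟩
  exact hΓ C hC x (hx.1 C hC) _ hfC (hf_maps x hx).2

theorem two_mul_alpha_le_ncard_sUnion_add_ncard_sInter [Finite V] {Γ : Set (Set V)}
    (hΓ : Γ ⊆ Omega G) (hne : Γ.Nonempty) :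
    2 * alpha G ≤ (⋃₀ Γ).ncard + (⋂₀ Γ).ncard := by
  induction Γ, Γ.toFinite using Set.Finite.induction_on with
  | empty => exact absurd hne Set.not_nonempty_empty
  | @insert B Γ₀ _ _ ih =>
    have hB : MaxIndep G B := hΓ (Set.mem_insert B Γ₀)
    rcases Γ₀.eq_empty_or_nonempty with rfl | hne₀
    · rw [← Set.singleton_def, Set.sUnion_singleton, Set.sInter_singleton, hB.2, two_mul]
    have hΓ₀ : Γ₀ ⊆ Omega G := (Set.subset_insert B Γ₀).trans hΓ
    have hstep := ncard_sInter_sdiff_le_ncard_sdiff_sUnion (fun C hC => (hΓ₀ hC).1) hne₀ hB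
    have hinter := Set.ncard_inter_add_ncard_sdiff_eq_ncard (⋂₀ Γ₀) B
    rw [Set.sUnion_insert, Set.sInter_insert, ← Set.ncard_sdiff_add_ncard, Set.inter_comm]
    have := ih hΓ₀ hne₀
    omega

end IndependentSets

namespace SimpleGraph.Subgraph.IsMatching

variable {G : SimpleGraph V} {M : G.Subgraph}

theorem exists_injOn_adj (hM : M.IsMatching) :
    ∃ p : V → V, Set.InjOn p M.verts ∧ ∀ v ∈ M.verts, M.Adj v (p v) := by
  have : ∀ v, ∃ w, v ∈ M.verts → M.Adj v w := fun v => by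
    by_cases hv : v ∈ M.verts
    exacts [(hM hv).exists.imp fun _ hw _ => hw, ⟨v, fun h => absurd h hv⟩]
  choose p hp using this
  exact ⟨p, fun u hu v hv huv => hM.eq_of_adj_right (hp u hu) (huv ▸ hp v hv), hp⟩

theorem ncard_verts [Finite V] (hM : M.IsMatching) : M.verts.ncard = 2 * M.edgeSet.ncard := by
  classical
  have := Fintype.ofFinite M.edgeSet
  have hfiber : ∀ e, Nat.card {v // hM.toEdge v = e} = 2 := by
    rintro ⟨e, he⟩
    induction e using Sym2.ind with
    | h u w =>
      change Nat.card ↥(hM.toEdge ⁻¹' {⟨s(u, w), he⟩}) = 2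
      rw [hM.toEdge_preimage_singleton he, Nat.card_coe_set_eq, Set.ncard_pair]
      exact fun h => he.ne (congrArg Subtype.val h)
  rw [← Nat.card_coe_set_eq, ← Nat.card_coe_set_eq M.edgeSet,
    ← Nat.card_congr (Equiv.sigmaFiberEquiv hM.toEdge), Nat.card_sigma,
    Finset.sum_congr rfl fun e _ => hfiber e, Finset.sum_const, Finset.card_univ,
    Nat.card_eq_fintype_card, smul_eq_mul, mul_comm]

theorem ncard_verts_le_ncard_compl_add_ncard_compl [Finite V] (hM : M.IsMatching)
    {Γ : Set (Set V)} (hΓ : ∀ C ∈ Γ, IndepSet G C) :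
    M.verts.ncard ≤ (⋃₀ Γ)ᶜ.ncard + (⋂₀ Γ)ᶜ.ncard := by
  obtain ⟨p, hp_inj, hp_adj⟩ := hM.exists_injOn_adj
  have hcore : (M.verts ∩ ⋂₀ Γ).ncard ≤ (⋃₀ Γ)ᶜ.ncard := by
    refine Set.ncard_le_ncard_of_injOn p (fun v hv => ?_) (hp_inj.mono Set.inter_subset_left)
    rintro ⟨C, hC, hpC⟩
    exact hΓ C hC v (hv.2 C hC) _ hpC (M.adj_sub (hp_adj v hv.1))
  have hrest : (M.verts \ ⋂₀ Γ).ncard ≤ (⋂₀ Γ)ᶜ.ncard := Set.ncard_le_ncard fun v hv => hv.2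
  rw [← Set.ncard_inter_add_ncard_sdiff_eq_ncard M.verts (⋂₀ Γ)]
  omega

end SimpleGraph.Subgraph.IsMatching

theorem exists_isMatching_ncard_edgeSet_eq_matchNum [Finite V] (G : SimpleGraph V) :
    ∃ M : G.Subgraph, M.IsMatching ∧ M.edgeSet.ncard = matchNum G :=
  Nat.sSup_mem (s := {n | ∃ M : G.Subgraph, M.IsMatching ∧ M.edgeSet.ncard = n})
    ⟨0, ⊥, fun _ hv => hv.elim, by simp⟩
    ⟨Nat.card (Sym2 V), by rintro _ ⟨M, -, rfl⟩; exact Set.ncard_le_card _⟩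

theorem ncard_sUnion_add_ncard_sInter_le [Finite V] {G : SimpleGraph V} {Γ : Set (Set V)}
    (hΓ : ∀ C ∈ Γ, IndepSet G C) :
    (⋃₀ Γ).ncard + (⋂₀ Γ).ncard ≤ 2 * (Nat.card V - matchNum G) := by
  obtain ⟨M, hM, hM_card⟩ := exists_isMatching_ncard_edgeSet_eq_matchNum G
  have hverts := hM.ncard_verts_le_ncard_compl_add_ncard_compl hΓ
  rw [hM.ncard_verts, hM_card] at hverts
  have hU := Set.ncard_add_ncard_compl (⋃₀ Γ)
  have hI := Set.ncard_add_ncard_compl (⋂₀ Γ)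
  omega

theorem stmt_11 [Fintype V] (G : SimpleGraph V)
    (Γ : Set (Set V)) (hΓ : Γ ⊆ Omega G) (hne : Γ.Nonempty) :
    2 * alpha G ≤ (⋃₀ Γ).ncard + (⋂₀ Γ).ncard ∧
      (⋃₀ Γ).ncard + (⋂₀ Γ).ncard ≤ 2 * (Fintype.card V - matchNum G) :=
  ⟨two_mul_alpha_le_ncard_sUnion_add_ncard_sInter hΓ hne,
    Nat.card_eq_fintype_card (α := V) ▸ ncard_sUnion_add_ncard_sInter_le fun _ hC => (hΓ hC).1⟩
end
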